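/- The classes of the variables T_{ij} in R(A,𝔫,L) are K-prime elements, and for (i,j) ≠ (k,l) the classes of T_{ij} and T_{kl} are not associated in R(A,𝔫,L). -/

import Mathlib

open MvPolynomial

section Setup

variable (𝕂 : Type) [Field 𝕂] [IsAlgClosed 𝕂] [CharZero 𝕂]
variable (r : ℕ) (a : Fin (r+1) → 𝕂 × 𝕂) (n : Fin (r+1) → ℕ)
variable (l : ∀ i : Fin (r+1), Fin (n i) → ℕ)

/-- The index set of the variables `T_{ij}`, `0 ≤ i ≤ r`, `1 ≤ j ≤ n_i`. -/
abbrev Idx (r : ℕ) (n : Fin (r+1) → ℕ) := Σ i : Fin (r+1), Fin (n i)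

/-- The monomial `T_i^{l_i} = T_{i1}^{l_{i1}} ⋯ T_{i n_i}^{l_{i n_i}}`. -/
noncomputable def mono (i : Fin (r+1)) : MvPolynomial (Idx r n) 𝕂 :=
  ∏ j : Fin (n i), (X ⟨i, j⟩ : MvPolynomial (Idx r n) 𝕂) ^ l i j

/-- `α_{ij} = det(a_i, a_j)`. -/
def alpha (i k : Fin (r+1)) : 𝕂 := (a i).1 * (a k).2 - (a k).1 * (a i).2

/-- The trinomial `g_{i,j,k} = α_{jk} T_i^{l_i} + α_{ki} T_j^{l_j} + α_{ij} T_k^{l_k}`. -/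
noncomputable def gPoly (i j k : Fin (r+1)) : MvPolynomial (Idx r n) 𝕂 :=
  C (alpha 𝕂 r a j k) * mono 𝕂 r n l i + C (alpha 𝕂 r a k i) * mono 𝕂 r n l j +
    C (alpha 𝕂 r a i j) * mono 𝕂 r n l k

/-- The ideal `⟨g_{i,i+1,i+2} ; 0 ≤ i ≤ r-2⟩`. -/
noncomputable def relIdeal : Ideal (MvPolynomial (Idx r n) 𝕂) :=
  Ideal.span { p | ∃ i j k : Fin (r+1), (j : ℕ) = (i : ℕ) + 1 ∧ (k : ℕ) = (i : ℕ) + 2 ∧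
    p = gPoly 𝕂 r a n l i j k }

/-- The ring `R(A, 𝔫, L)`. -/
abbrev RAnL := MvPolynomial (Idx r n) 𝕂 ⧸ relIdeal 𝕂 r a n l

/-- Row `i` (for `1 ≤ i ≤ r`) of the `r × n` matrix `P`. -/
def Prow (i : Fin r) : Idx r n → ℤ :=
  fun x => if x.1 = 0 then -(l x.1 x.2 : ℤ) else if x.1 = i.succ then (l x.1 x.2 : ℤ) else 0

/-- The subgroup of `ℤ^n` generated by the rows of `P`. -/
def rowSpan : AddSubgroup (Idx r n → ℤ) := AddSubgroup.closure (Set.range (Prow r n l))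

/-- The grading group `K = ℤ^n / P^*(M)`. -/
abbrev Kgrp := (Idx r n → ℤ) ⧸ rowSpan r n l

/-- The projection `Q : ℤ^n → K`. -/
noncomputable def Qmap : (Idx r n → ℤ) →+ Kgrp r n l := QuotientAddGroup.mk' (rowSpan r n l)

/-- The weight `deg T_{ij} := Q(e_{ij})` defining the `K`-grading of `S`. -/
noncomputable def wK : Idx r n → Kgrp r n l := fun x => Qmap r n l (Pi.single x (1 : ℤ))

/-- An element of `R(A,𝔫,L)` is homogeneous of degree `d` if it is the image of a
`K`-homogeneous polynomial of degree `d`. -/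
def IsHomog (d : Kgrp r n l) (y : RAnL 𝕂 r a n l) : Prop :=
  ∃ p : MvPolynomial (Idx r n) 𝕂, p.IsWeightedHomogeneous (wK r n l) d ∧
    Ideal.Quotient.mk (relIdeal 𝕂 r a n l) p = y

/-- `K`-prime elements of `R(A,𝔫,L)`. -/
def KPrime (f : RAnL 𝕂 r a n l) : Prop :=
  (∃ d, IsHomog 𝕂 r a n l d f) ∧ f ≠ 0 ∧ ¬ IsUnit f ∧
    ∀ x y : RAnL 𝕂 r a n l, (∃ d, IsHomog 𝕂 r a n l d x) → (∃ d, IsHomog 𝕂 r a n l d y) →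
      f ∣ x * y → f ∣ x ∨ f ∣ y

end Setup

/-! Fix `x = (i₀, j₀)`. There is a point `t` of `Spec R(A,𝔫,L)` with `t_x = 0`, all other
coordinates nonzero and `t(T_i^{l_i}) = α_{i₀ i}`. Modulo `J = ⟨g_{i,j,k}⟩ + ⟨T_x⟩` the relations
`g_{i₀,i,j}` make any two blocks `T_i^{l_i}`, `T_j^{l_j}` proportional, and two monomials of the
same `K`-degree differ only by trading such blocks. So a homogeneous `p` is congruent modulo `J`
to `(p(t) / t^ν) T^ν` for every monomial `T^ν` of its degree with `ν_x = 0`: it lies in `J` iff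
`p(t) = 0`. This makes divisibility by `T_x` a prime condition on homogeneous elements, and
`T_y ∉ J` for `y ≠ x` since `t_y ≠ 0`. -/

theorem Ideal.Quotient.mk_dvd_mk_iff {R : Type*} [CommRing R] (I : Ideal R) (a b : R) :
    Ideal.Quotient.mk I a ∣ Ideal.Quotient.mk I b ↔ b ∈ I ⊔ Ideal.span {a} := by
  rw [← Ideal.mem_span_singleton, ← Set.image_singleton, ← Ideal.map_span,
    Ideal.mem_quotient_iff_mem_sup, sup_comm]

theorem Nat.eq_min_add_toNat_mul {a b l : ℕ} {m : ℤ} (h : (a : ℤ) - b = m * l) :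
    a = min a b + m.toNat * l := by
  rcases le_or_gt 0 m with hm | hm
  · obtain ⟨k, rfl⟩ := Int.eq_ofNat_of_zero_le hm
    have : a = b + k * l := by exact_mod_cast (by linarith : (a : ℤ) = b + k * l)
    simp [this]
  · have : a ≤ b := by exact_mod_cast (by nlinarith : (a : ℤ) ≤ b)
    simp [this, Int.toNat_of_nonpos hm.le]

namespace MvPolynomial

variable {σ 𝕂 : Type*} [Field 𝕂]

theorem C_mul_mem_iff {I : Ideal (MvPolynomial σ 𝕂)} {k : 𝕂} (hk : k ≠ 0)
    {p : MvPolynomial σ 𝕂} : C k * p ∈ I ↔ p ∈ I :=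
  I.unit_mul_mem_iff_mem (hk.isUnit.map C)

theorem monomial_one_eq_prod [Fintype σ] (μ : σ →₀ ℕ) :
    (monomial μ 1 : MvPolynomial σ 𝕂) = ∏ v, X v ^ μ v := by
  rw [monomial_eq, C_1, one_mul, Finsupp.prod_fintype _ _ fun _ => pow_zero _]

theorem eval_monomial_one_ne_zero {t : σ → 𝕂} {μ : σ →₀ ℕ} (h : ∀ v ∈ μ.support, t v ≠ 0) :
    eval t (monomial μ 1) ≠ 0 := by
  rw [eval_monomial, one_mul]
  exact Finset.prod_ne_zero_iff.mpr fun v hv => pow_ne_zero _ (h v hv)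

/-- `a ≡ (a(t) / b(t)) • b` modulo `I` (when `b(t) ≠ 0`), written without division. -/
def EvalProportional (I : Ideal (MvPolynomial σ 𝕂)) (t : σ → 𝕂) (a b : MvPolynomial σ 𝕂) :
    Prop :=
  C (eval t b) * a - C (eval t a) * b ∈ I

namespace EvalProportional

variable {I : Ideal (MvPolynomial σ 𝕂)} {t : σ → 𝕂} {a b c d : MvPolynomial σ 𝕂}

theorem refl (a : MvPolynomial σ 𝕂) : EvalProportional I t a a := by
  simp [EvalProportional]

theorem symm (h : EvalProportional I t a b) : EvalProportional I t b a := by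
  simpa [EvalProportional] using I.neg_mem h

theorem trans (hb : eval t b ≠ 0) (hab : EvalProportional I t a b)
    (hbc : EvalProportional I t b c) : EvalProportional I t a c := by
  rw [EvalProportional, ← C_mul_mem_iff hb]
  have key : C (eval t b) * (C (eval t c) * a - C (eval t a) * c) =
      C (eval t c) * (C (eval t b) * a - C (eval t a) * b) +
        C (eval t a) * (C (eval t c) * b - C (eval t b) * c) := by ring
  rw [key]
  exact add_mem (I.mul_mem_left _ hab) (I.mul_mem_left _ hbc)

theorem mul (hab : EvalProportional I t a b) (hcd : EvalProportional I t c d) :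
    EvalProportional I t (a * c) (b * d) := by
  have key : C (eval t (b * d)) * (a * c) - C (eval t (a * c)) * (b * d) =
      (C (eval t d) * c) * (C (eval t b) * a - C (eval t a) * b) +
        (C (eval t a) * b) * (C (eval t d) * c - C (eval t c) * d) := by
    simp only [map_mul]; ring
  rw [EvalProportional, key]
  exact add_mem (I.mul_mem_left _ hab) (I.mul_mem_left _ hcd)

theorem pow (h : EvalProportional I t a b) (k : ℕ) : EvalProportional I t (a ^ k) (b ^ k) := by
  induction k with
  | zero => simpa using refl 1
  | succ k ih => simpa only [pow_succ] using ih.mul h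

theorem prod {ι : Type*} (s : Finset ι) {f g : ι → MvPolynomial σ 𝕂}
    (h : ∀ i ∈ s, EvalProportional I t (f i) (g i)) :
    EvalProportional I t (∏ i ∈ s, f i) (∏ i ∈ s, g i) := by
  induction s using Finset.cons_induction with
  | empty => simpa using refl 1
  | cons i s hi ih =>
    rw [Finset.prod_cons, Finset.prod_cons]
    exact (h i (s.mem_cons_self i)).mul (ih fun j hj => h j (Finset.mem_cons_of_mem hj))

theorem C_mul (k : 𝕂) (h : EvalProportional I t a b) : EvalProportional I t (C k * a) b := by
  have key : C (eval t b) * (C k * a) - C (eval t (C k * a)) * b =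
      C k * (C (eval t b) * a - C (eval t a) * b) := by
    simp only [map_mul, eval_C]; ring
  rw [EvalProportional, key]
  exact I.mul_mem_left _ h

theorem sum {ι : Type*} (s : Finset ι) {f : ι → MvPolynomial σ 𝕂}
    (h : ∀ i ∈ s, EvalProportional I t (f i) b) : EvalProportional I t (∑ i ∈ s, f i) b := by
  rw [EvalProportional, map_sum, map_sum, Finset.mul_sum, Finset.sum_mul,
    ← Finset.sum_sub_distrib]
  exact I.sum_mem h

theorem mem_of_eval_eq_zero (hb : eval t b ≠ 0) (h : EvalProportional I t a b)
    (ha : eval t a = 0) : a ∈ I := by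
  rw [← C_mul_mem_iff hb]
  simpa [EvalProportional, ha] using h

end EvalProportional

end MvPolynomial

section Trinomials

variable {𝕂 : Type} [Field 𝕂] {r : ℕ} {a : Fin (r+1) → 𝕂 × 𝕂} {n : Fin (r+1) → ℕ}
  {l : ∀ i : Fin (r+1), Fin (n i) → ℕ}

theorem alpha_self (i : Fin (r+1)) : alpha 𝕂 r a i i = 0 := by
  simp [alpha]

theorem alpha_ne_zero (ha : ∀ i k : Fin (r+1), i ≠ k → LinearIndependent 𝕂 ![a i, a k])
    {i k : Fin (r+1)} (h : i ≠ k) : alpha 𝕂 r a i k ≠ 0 := by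
  intro h0
  rw [alpha] at h0
  have hpair := LinearIndependent.pair_iff.mp (ha i k h)
  have h1 := hpair (a k).1 (-(a i).1) (Prod.ext (by simp; ring) (by simp; linear_combination -h0))
  have h2 := hpair (a k).2 (-(a i).2) (Prod.ext (by simp; linear_combination h0) (by simp; ring))
  exact (ha i k h).ne_zero 0 (Prod.ext (neg_eq_zero.mp h1.2) (neg_eq_zero.mp h2.2))

theorem alpha_plucker (u i j k : Fin (r+1)) :
    alpha 𝕂 r a j k * alpha 𝕂 r a u i + alpha 𝕂 r a k i * alpha 𝕂 r a u j +
      alpha 𝕂 r a i j * alpha 𝕂 r a u k = 0 := by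
  simp only [alpha]; ring

theorem C_alpha_mul_gPoly (u v i j k : Fin (r+1)) :
    C (alpha 𝕂 r a u v) * gPoly 𝕂 r a n l i j k =
      C (alpha 𝕂 r a j k) * gPoly 𝕂 r a n l u v i + C (alpha 𝕂 r a k i) * gPoly 𝕂 r a n l u v j +
        C (alpha 𝕂 r a i j) * gPoly 𝕂 r a n l u v k := by
  simp only [gPoly, alpha, map_sub, map_mul]; ring

theorem gPoly_self_left (u v : Fin (r+1)) : gPoly 𝕂 r a n l u v u = 0 := by
  simp only [gPoly, alpha, map_sub, map_mul]; ring

theorem gPoly_self_right (u v : Fin (r+1)) : gPoly 𝕂 r a n l u v v = 0 := by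
  simp only [gPoly, alpha, map_sub, map_mul]; ring

theorem gPoly_zero_one_mem_relIdeal (hr : 1 ≤ r)
    (ha : ∀ i k : Fin (r+1), i ≠ k → LinearIndependent 𝕂 ![a i, a k]) :
    ∀ m (hm : m < r+1), gPoly 𝕂 r a n l ⟨0, by omega⟩ ⟨1, by omega⟩ ⟨m, hm⟩ ∈ relIdeal 𝕂 r a n l
  | 0, _ => by simp [gPoly_self_left]
  | 1, _ => by simp [gPoly_self_right]
  | 2, hm => Ideal.subset_span ⟨_, _, ⟨2, hm⟩, rfl, rfl, rfl⟩
  | m + 3, hm => by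
    have hgen : gPoly 𝕂 r a n l ⟨m+1, by omega⟩ ⟨m+2, by omega⟩ ⟨m+3, hm⟩ ∈ relIdeal 𝕂 r a n l :=
      Ideal.subset_span ⟨_, _, _, rfl, rfl, rfl⟩
    have h1 := gPoly_zero_one_mem_relIdeal hr ha (m+1) (by omega)
    have h2 := gPoly_zero_one_mem_relIdeal hr ha (m+2) (by omega)
    rw [← C_mul_mem_iff (alpha_ne_zero ha (i := ⟨m+1, by omega⟩) (k := ⟨m+2, by omega⟩)
      (by simp))]
    have key := C_alpha_mul_gPoly (a := a) (l := l) ⟨0, by omega⟩ ⟨1, by omega⟩ ⟨m+1, by omega⟩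
      ⟨m+2, by omega⟩ ⟨m+3, hm⟩
    rw [eq_sub_of_add_eq' key.symm]
    exact sub_mem (Ideal.mul_mem_left _ _ hgen)
      (add_mem (Ideal.mul_mem_left _ _ h1) (Ideal.mul_mem_left _ _ h2))

theorem gPoly_mem_relIdeal (hr : 1 ≤ r)
    (ha : ∀ i k : Fin (r+1), i ≠ k → LinearIndependent 𝕂 ![a i, a k]) (i j k : Fin (r+1)) :
    gPoly 𝕂 r a n l i j k ∈ relIdeal 𝕂 r a n l := by
  rw [← C_mul_mem_iff (alpha_ne_zero ha (i := ⟨0, by omega⟩) (k := ⟨1, by omega⟩) (by simp)),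
    C_alpha_mul_gPoly]
  have hmem := gPoly_zero_one_mem_relIdeal (n := n) (l := l) hr ha
  exact add_mem (add_mem (Ideal.mul_mem_left _ _ (hmem i i.isLt))
    (Ideal.mul_mem_left _ _ (hmem j j.isLt))) (Ideal.mul_mem_left _ _ (hmem k k.isLt))

end Trinomials

section Grading

variable {r : ℕ} {n : Fin (r+1) → ℕ} {l : ∀ i : Fin (r+1), Fin (n i) → ℕ}

theorem exists_block_of_mem_rowSpan {w : Idx r n → ℤ} (hw : w ∈ rowSpan r n l) :
    ∃ m : Fin (r+1) → ℤ, ∑ i, m i = 0 ∧ ∀ v : Idx r n, w v = m v.1 * l v.1 v.2 := by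
  induction hw using AddSubgroup.closure_induction with
  | mem w hw =>
    obtain ⟨i, rfl⟩ := hw
    refine ⟨Pi.single i.succ 1 - Pi.single 0 1, by simp, fun v => ?_⟩
    by_cases h0 : v.1 = 0
    · simp [Prow, h0, Fin.succ_ne_zero]
    · by_cases hi : v.1 = i.succ <;> simp [Prow, h0, hi]
  | zero => exact ⟨0, by simp, by simp⟩
  | add w w' _ _ hw hw' =>
    obtain ⟨m, hm, hwm⟩ := hw
    obtain ⟨m', hm', hwm'⟩ := hw'
    exact ⟨m + m', by simp [Finset.sum_add_distrib, hm, hm'], fun v => by simp [hwm, hwm', add_mul]⟩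
  | neg w _ hw =>
    obtain ⟨m, hm, hwm⟩ := hw
    exact ⟨-m, by simp [hm], fun v => by simp [hwm]⟩

theorem weight_wK (μ : Idx r n →₀ ℕ) :
    Finsupp.weight (wK r n l) μ = Qmap r n l (fun v => μ v) := by
  rw [Finsupp.weight_apply, Finsupp.sum_fintype _ _ (by simp)]
  conv_rhs => rw [← Finset.univ_sum_single (fun v => (μ v : ℤ))]
  simp only [wK, map_sum, ← map_nsmul]
  refine Finset.sum_congr rfl fun v _ => congrArg _ ?_
  ext u
  simp [Pi.single_apply]

theorem exists_block_of_weight_eq {μ ν : Idx r n →₀ ℕ}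
    (h : Finsupp.weight (wK r n l) μ = Finsupp.weight (wK r n l) ν) :
    ∃ m : Fin (r+1) → ℤ, ∑ i, m i = 0 ∧ ∀ v : Idx r n, (μ v : ℤ) - ν v = m v.1 * l v.1 v.2 := by
  rw [weight_wK, weight_wK, Qmap, QuotientAddGroup.mk'_apply, QuotientAddGroup.mk'_apply,
    QuotientAddGroup.eq_iff_sub_mem] at h
  exact exists_block_of_mem_rowSpan h

end Grading

section Monomials

variable {𝕂 : Type} [Field 𝕂] {r : ℕ} {n : Fin (r+1) → ℕ} {l : ∀ i : Fin (r+1), Fin (n i) → ℕ}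

theorem prod_mono_pow (p : Fin (r+1) → ℕ) :
    ∏ i, mono 𝕂 r n l i ^ p i = ∏ v : Idx r n, X v ^ (p v.1 * l v.1 v.2) := by
  simp only [mono, ← Finset.prod_pow, ← pow_mul, Fintype.prod_sigma, mul_comm]

theorem monomial_eq_mul_prod_mono_pow {μ τ : Idx r n →₀ ℕ} {p : Fin (r+1) → ℕ}
    (h : ∀ v, μ v = τ v + p v.1 * l v.1 v.2) :
    monomial μ (1 : 𝕂) = monomial τ 1 * ∏ i, mono 𝕂 r n l i ^ p i := by
  simp only [monomial_one_eq_prod, prod_mono_pow, ← Finset.prod_mul_distrib, h, pow_add]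

theorem X_dvd_mono (hl : ∀ i j, 0 < l i j) (x : Idx r n) :
    (X x : MvPolynomial (Idx r n) 𝕂) ∣ mono 𝕂 r n l x.1 :=
  (dvd_pow_self _ (hl x.1 x.2).ne').trans (Finset.dvd_prod_of_mem _ (Finset.mem_univ x.2))

end Monomials

section DivisorPoint

variable {𝕂 : Type} [Field 𝕂] {r : ℕ} {a : Fin (r+1) → 𝕂 × 𝕂} {n : Fin (r+1) → ℕ}
  {l : ∀ i : Fin (r+1), Fin (n i) → ℕ}

/-- A point of `Spec R(A,𝔫,L)` on the divisor `T_x = 0`, off all other coordinate hyperplanes. -/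
structure IsDivisorPoint (a : Fin (r+1) → 𝕂 × 𝕂) (l : ∀ i : Fin (r+1), Fin (n i) → ℕ)
    (x : Idx r n) (t : Idx r n → 𝕂) : Prop where
  apply_self : t x = 0
  apply_ne : ∀ v, v ≠ x → t v ≠ 0
  eval_mono : ∀ i, eval t (mono 𝕂 r n l i) = alpha 𝕂 r a x.1 i

theorem exists_isDivisorPoint [IsAlgClosed 𝕂]
    (ha : ∀ i k : Fin (r+1), i ≠ k → LinearIndependent 𝕂 ![a i, a k])
    (hn : ∀ i, 0 < n i) (hl : ∀ i j, 0 < l i j) (x : Idx r n) : ∃ t, IsDivisorPoint a l x t := by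
  obtain ⟨i₀, j₀⟩ := x
  have hdeg : ∀ i, ∑ j, l i j ≠ 0 := fun i =>
    (Finset.sum_pos (fun j _ => hl i j) ⟨⟨0, hn i⟩, Finset.mem_univ _⟩).ne'
  choose ρ hρ using fun i => IsAlgClosed.exists_pow_nat_eq
    (if i = i₀ then 1 else alpha 𝕂 r a i₀ i) (Nat.pos_of_ne_zero (hdeg i))
  have hρ0 : ∀ i, ρ i ≠ 0 := fun i => ne_zero_pow (hdeg i) <| by
    rw [hρ i]
    split_ifs with hi
    exacts [one_ne_zero, alpha_ne_zero ha (Ne.symm hi)]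
  refine ⟨fun v => if v = ⟨i₀, j₀⟩ then 0 else ρ v.1, by simp, fun v hv => by simp [hv, hρ0],
    fun i => ?_⟩
  simp only [mono, map_prod, map_pow, eval_X]
  by_cases hi : i = i₀
  · subst hi
    rw [alpha_self]
    exact Finset.prod_eq_zero (Finset.mem_univ j₀) (by simp [(hl _ _).ne'])
  · simp [hi, Finset.prod_pow_eq_pow_sum, hρ]

namespace IsDivisorPoint

variable {x : Idx r n} {t : Idx r n → 𝕂}

theorem le_ker (ht : IsDivisorPoint a l x t) :
    relIdeal 𝕂 r a n l ⊔ Ideal.span {X x} ≤ RingHom.ker (eval t) := by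
  refine sup_le (Ideal.span_le.mpr ?_) ((Ideal.span_singleton_le_iff_mem _).mpr ?_)
  · rintro _ ⟨i, j, k, -, -, rfl⟩
    simp [gPoly, ht.eval_mono, alpha_plucker]
  · simp [ht.apply_self]

variable (hr : 1 ≤ r) (ha : ∀ i k : Fin (r+1), i ≠ k → LinearIndependent 𝕂 ![a i, a k])
  (hl : ∀ i j, 0 < l i j)
include hr ha hl

theorem evalProportional_mono (ht : IsDivisorPoint a l x t) (i j : Fin (r+1)) :
    EvalProportional (relIdeal 𝕂 r a n l ⊔ Ideal.span {X x}) t (mono 𝕂 r n l i)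
      (mono 𝕂 r n l j) := by
  have key : C (alpha 𝕂 r a x.1 j) * mono 𝕂 r n l i - C (alpha 𝕂 r a x.1 i) * mono 𝕂 r n l j =
      C (alpha 𝕂 r a i j) * mono 𝕂 r n l x.1 - gPoly 𝕂 r a n l x.1 i j := by
    simp only [gPoly, alpha, map_sub, map_mul]; ring
  rw [EvalProportional, ht.eval_mono, ht.eval_mono, key]
  exact sub_mem (Ideal.mem_sup_right (Ideal.mul_mem_left _ _
    (Ideal.mem_span_singleton.mpr (X_dvd_mono hl x))))
    (Ideal.mem_sup_left (gPoly_mem_relIdeal hr ha _ _ _))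

theorem evalProportional_prod_mono_pow (ht : IsDivisorPoint a l x t) {p q : Fin (r+1) → ℕ}
    (hpq : ∑ i, p i = ∑ i, q i) :
    EvalProportional (relIdeal 𝕂 r a n l ⊔ Ideal.span {X x}) t (∏ i, mono 𝕂 r n l i ^ p i)
      (∏ i, mono 𝕂 r n l i ^ q i) := by
  have : Nontrivial (Fin (r+1)) := Fin.nontrivial_iff_two_le.mpr (by omega)
  obtain ⟨j, hj⟩ := exists_ne x.1
  have hpow (s : Fin (r+1) → ℕ) : EvalProportional (relIdeal 𝕂 r a n l ⊔ Ideal.span {X x}) t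
      (∏ i, mono 𝕂 r n l i ^ s i) (mono 𝕂 r n l j ^ ∑ i, s i) := by
    rw [← Finset.prod_pow_eq_pow_sum]
    exact EvalProportional.prod _ fun i _ => (ht.evalProportional_mono hr ha hl i j).pow (s i)
  have hne : eval t (mono 𝕂 r n l j ^ ∑ i, p i) ≠ 0 := by
    rw [map_pow, ht.eval_mono]
    exact pow_ne_zero _ (alpha_ne_zero ha (Ne.symm hj))
  exact (hpow p).trans hne (hpq ▸ (hpow q).symm)

theorem evalProportional_monomial (ht : IsDivisorPoint a l x t) {μ ν : Idx r n →₀ ℕ}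
    (h : Finsupp.weight (wK r n l) μ = Finsupp.weight (wK r n l) ν) :
    EvalProportional (relIdeal 𝕂 r a n l ⊔ Ideal.span {X x}) t (monomial μ 1) (monomial ν 1) := by
  obtain ⟨m, hm, hμν⟩ := exists_block_of_weight_eq h
  -- `μ` and `ν` share the factor `μ ⊓ ν`; the rest are products of the `T_i^{l_i}`
  have hμ (v : Idx r n) : μ v = (μ ⊓ ν) v + (m v.1).toNat * l v.1 v.2 :=
    Nat.eq_min_add_toNat_mul (hμν v)
  have hν (v : Idx r n) : ν v = (μ ⊓ ν) v + (-m v.1).toNat * l v.1 v.2 := by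
    rw [Finsupp.inf_apply, inf_comm]
    exact Nat.eq_min_add_toNat_mul (by rw [neg_mul, ← hμν v]; ring)
  rw [monomial_eq_mul_prod_mono_pow (p := fun i => (m i).toNat) hμ,
    monomial_eq_mul_prod_mono_pow (p := fun i => (-m i).toNat) hν]
  refine (EvalProportional.refl _).mul (ht.evalProportional_prod_mono_pow hr ha hl ?_)
  have hsum : ∑ i, ((m i).toNat : ℤ) - ∑ i, ((-m i).toNat : ℤ) = 0 := by
    rw [← Finset.sum_sub_distrib]
    simpa [Int.toNat_sub_toNat_neg] using hm
  exact_mod_cast sub_eq_zero.mp hsum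

theorem evalProportional_of_isWeightedHomogeneous (ht : IsDivisorPoint a l x t)
    {p : MvPolynomial (Idx r n) 𝕂} {d : Kgrp r n l} (hp : p.IsWeightedHomogeneous (wK r n l) d)
    {ν : Idx r n →₀ ℕ} (hν : Finsupp.weight (wK r n l) ν = d) :
    EvalProportional (relIdeal 𝕂 r a n l ⊔ Ideal.span {X x}) t p (monomial ν 1) := by
  rw [p.as_sum]
  refine EvalProportional.sum _ fun μ hμ => ?_
  rw [← mul_one (coeff μ p), ← C_mul_monomial]
  exact (ht.evalProportional_monomial hr ha hl ((hp (mem_support_iff.mp hμ)).trans hν.symm)).C_mul _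

theorem mk_X_dvd_mk_iff_eval_eq_zero (ht : IsDivisorPoint a l x t)
    {p : MvPolynomial (Idx r n) 𝕂} {d : Kgrp r n l} (hp : p.IsWeightedHomogeneous (wK r n l) d) :
    Ideal.Quotient.mk (relIdeal 𝕂 r a n l) (X x) ∣ Ideal.Quotient.mk (relIdeal 𝕂 r a n l) p ↔
      eval t p = 0 := by
  rw [Ideal.Quotient.mk_dvd_mk_iff]
  refine ⟨fun h => ht.le_ker h, fun h0 => ?_⟩
  by_cases hfree : ∃ μ ∈ p.support, μ x = 0
  · obtain ⟨μ, hμ, hμx⟩ := hfree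
    refine (ht.evalProportional_of_isWeightedHomogeneous hr ha hl hp
      (hp (mem_support_iff.mp hμ))).mem_of_eval_eq_zero ?_ h0
    exact eval_monomial_one_ne_zero fun v hv =>
      ht.apply_ne v (by rintro rfl; exact Finsupp.mem_support_iff.mp hv hμx)
  · push Not at hfree
    refine Ideal.mem_sup_right ?_
    rw [← Set.image_singleton, mem_ideal_span_X_image]
    exact fun μ hμ => ⟨x, rfl, hfree μ hμ⟩

end IsDivisorPoint

theorem mk_X_ne_zero [IsAlgClosed 𝕂] (hr : 1 ≤ r)
    (ha : ∀ i k : Fin (r+1), i ≠ k → LinearIndependent 𝕂 ![a i, a k])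
    (hn : ∀ i, 0 < n i) (hl : ∀ i j, 0 < l i j) (x : Idx r n) :
    Ideal.Quotient.mk (relIdeal 𝕂 r a n l) (X x) ≠ 0 := by
  have : Nontrivial (Fin (r+1)) := Fin.nontrivial_iff_two_le.mpr (by omega)
  obtain ⟨i, hi⟩ := exists_ne x.1
  obtain ⟨t, ht⟩ := exists_isDivisorPoint ha hn hl (⟨i, ⟨0, hn i⟩⟩ : Idx r n)
  rw [Ne, Ideal.Quotient.eq_zero_iff_mem]
  intro hx
  have h0 : eval t (X x) = 0 := ht.le_ker (Ideal.mem_sup_left hx)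
  exact ht.apply_ne x (fun h => hi (congrArg Sigma.fst h).symm) (by simpa using h0)

end DivisorPoint

theorem statement10_general (𝕂 : Type) [Field 𝕂] [IsAlgClosed 𝕂]
    (r : ℕ) (hr : 1 ≤ r) (a : Fin (r+1) → 𝕂 × 𝕂)
    (ha : ∀ i k : Fin (r+1), i ≠ k → LinearIndependent 𝕂 ![a i, a k])
    (n : Fin (r+1) → ℕ) (hn : ∀ i, 0 < n i)
    (l : ∀ i : Fin (r+1), Fin (n i) → ℕ) (hl : ∀ i j, 0 < l i j) :
    (∀ x : Idx r n, KPrime 𝕂 r a n l (Ideal.Quotient.mk (relIdeal 𝕂 r a n l) (X x))) ∧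
    (∀ x y : Idx r n, x ≠ y →
      ¬ Associated (Ideal.Quotient.mk (relIdeal 𝕂 r a n l) (X x))
        (Ideal.Quotient.mk (relIdeal 𝕂 r a n l) (X y))) := by
  refine ⟨fun x => ?_, fun x y hxy hassoc => ?_⟩ <;>
    obtain ⟨t, ht⟩ := exists_isDivisorPoint ha hn hl x
  · have hdvd := fun {p d} (hp : IsWeightedHomogeneous (wK r n l) p d) =>
      ht.mk_X_dvd_mk_iff_eval_eq_zero hr ha hl hp
    refine ⟨⟨_, X x, isWeightedHomogeneous_X _ _ _, rfl⟩, mk_X_ne_zero hr ha hn hl x,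
      fun hu => ?_, ?_⟩
    · have h1 := (hdvd (isWeightedHomogeneous_one 𝕂 (wK r n l))).mp (by simpa using hu.dvd)
      simp at h1
    · rintro _ _ ⟨_, p, hp, rfl⟩ ⟨_, q, hq, rfl⟩ hpq
      rw [← map_mul, hdvd (hp.mul hq), map_mul, mul_eq_zero] at hpq
      rwa [hdvd hp, hdvd hq]
  · have h0 := (ht.mk_X_dvd_mk_iff_eval_eq_zero hr ha hl (isWeightedHomogeneous_X 𝕂 _ y)).mp
      hassoc.dvd
    exact ht.apply_ne y hxy.symm (by simpa using h0)

/-- The classes of the variables `T_{ij}` in `R(A,𝔫,L)` are `K`-prime, and for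
`(i,j) ≠ (k,l)` the classes of `T_{ij}` and `T_{kl}` are not associated. -/
theorem statement10 (𝕂 : Type) [Field 𝕂] [IsAlgClosed 𝕂] [CharZero 𝕂]
    (r : ℕ) (hr : 1 ≤ r) (a : Fin (r+1) → 𝕂 × 𝕂)
    (ha : ∀ i k : Fin (r+1), i ≠ k → LinearIndependent 𝕂 ![a i, a k])
    (n : Fin (r+1) → ℕ) (hn : ∀ i, 0 < n i)
    (l : ∀ i : Fin (r+1), Fin (n i) → ℕ) (hl : ∀ i j, 0 < l i j) :
    (∀ x : Idx r n, KPrime 𝕂 r a n l (Ideal.Quotient.mk (relIdeal 𝕂 r a n l) (X x))) ∧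
    (∀ x y : Idx r n, x ≠ y →
      ¬ Associated (Ideal.Quotient.mk (relIdeal 𝕂 r a n l) (X x))
        (Ideal.Quotient.mk (relIdeal 𝕂 r a n l) (X y))) :=
  statement10_general 𝕂 r hr a ha n hn l hl
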